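/- arXiv:2403.18669 — 2 statements merged into one kernel-verified Lean document; each statement's English description precedes it below -/
import Mathlib

section
/- For every n ≥ 1, the recurrence coefficients α_n and β_n satisfy the nonlinear third-order difference equation [(r_n + r_{n+1} + α_n R_n − λ) β_n R_{n−1} + (r_{n−1} + r_n + α_{n−1} R_{n−1} − λ) β_n R_n + t r_n] × [(r_n + r_{n+1} + α_n R_n − λ) β_n R_{n−1} + (r_{n−1} + r_n + α_{n−1} R_{n−1} − λ) β_n R_n − t r_n + λ t] = β_n (2r_n − λ)² (r_n + r_{n+1} + α_n R_n − λ)(r_{n−1} + r_n + α_{n−1} R_{n−1} − λ), where R_n := 3(α_n² + β_n + β_{n+1}) and r_n := 3(α_n + α_{n−1})β_n − n. -/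
/-!
Everything happens inside the moment functionals `L k p = ∫₀^∞ p(x) w(x) x⁻ᵏ dx`, `k = 0, 1, 2`.
They satisfy `L (k + 1) (X * p) = L k p` and, since `w'/w = λ/x - 3x² + t/x²` and `p w` vanishes
at both ends of `(0, ∞)`, the Pearson relation `L 0 p' + λ L 1 p + t L 2 p = 3 L 0 (X² p)`.
Applied to `p = P_n²` and `p = P_n P_{n-1}` and expanded with the recurrence, it gives
`λ u_n + t U_n = R_n h_n` and `λ v_n + t V_n = r_n h_{n-1}`, where `u, U` (resp. `v, V`) are the
`L 1`, `L 2` moments of `P_n²` (resp. `P_n P_{n-1}`); together with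
`L (k + 1) (X P_n²) = L k (P_n²)` these give `S_n h_n = t u_n`, `S_n = r_n + r_{n+1} + α_n R_n - λ`.
Writing `P_n = X q + P_n(0)`, orthogonality reduces all these moments to `P_n(0)`, `P_n'(0)`,
`L 1 P_n`, `L 2 P_n`; eliminating those gives `v_n (v_n - h_{n-1}) = u_n u_{n-1}` and a companion
identity for `V_n`. Eliminating the moments from all these relations leaves the equation.
-/

open MeasureTheory Polynomial Real Filter Set Topology
open scoped Nat

structure IsOrthogonalSequence {K : Type*} [CommRing K] (L : K[X] →ₗ[K] K) (P : ℕ → K[X])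
    (h : ℕ → K) : Prop where
  monic : ∀ n, (P n).Monic
  natDegree_eq : ∀ n, (P n).natDegree = n
  apply_mul : ∀ m n, L (P m * P n) = if m = n then h n else 0

/-- At `n = 0` the term `P (0 - 1) = P 0` is a junk value, annihilated by `β 0 = 0`. -/
structure IsThreeTermRecurrence {K : Type*} [CommRing K] (P : ℕ → K[X]) (α β : ℕ → K) :
    Prop where
  beta_zero : β 0 = 0
  X_mul : ∀ n, X * P n = P (n + 1) + C (α n) * P n + C (β n) * P (n - 1)

def ladderR {K : Type*} [CommRing K] (α β : ℕ → K) (n : ℕ) : K :=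
  3 * (α n ^ 2 + β n + β (n + 1))

def ladderr {K : Type*} [CommRing K] (α β : ℕ → K) (n : ℕ) : K :=
  3 * (α n + α (n - 1)) * β n - n

section Algebra

variable {K : Type*} [CommRing K] {P : ℕ → K[X]} {h α β : ℕ → K}

lemma IsThreeTermRecurrence.map_X_mul_mul (hrec : IsThreeTermRecurrence P α β)
    (L : K[X] →ₗ[K] K) (n : ℕ) (q : K[X]) :
    L (X * P n * q) = L (P (n + 1) * q) + α n * L (P n * q) + β n * L (P (n - 1) * q) := by
  simp only [hrec.X_mul n, add_mul, map_add, ← smul_eq_C_mul, smul_mul_assoc, map_smul,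
    smul_eq_mul]

lemma IsThreeTermRecurrence.map_succ_mul_self {L : ℕ → K[X] →ₗ[K] K}
    (hrec : IsThreeTermRecurrence P α β) (hshift : ∀ k p, L (k + 1) (X * p) = L k p) (k m : ℕ) :
    L (k + 1) (P (m + 1) * P m) + α m * L (k + 1) (P m * P m)
      + β m * L (k + 1) (P m * P (m - 1)) = L k (P m * P m) := by
  rw [← hshift k, ← mul_assoc, hrec.map_X_mul_mul, mul_comm (P (m - 1))]

lemma map_succ_mul_eq_divX {L : ℕ → K[X] →ₗ[K] K} (hshift : ∀ k p, L (k + 1) (X * p) = L k p)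
    (k : ℕ) (a b : K[X]) :
    L (k + 1) (a * b) = L k (a.divX * b) + a.coeff 0 * L (k + 1) b := by
  conv_lhs => rw [← X_mul_divX_add a]
  rw [add_mul, map_add, mul_assoc, hshift, ← smul_eq_C_mul, map_smul, smul_eq_mul]

namespace IsOrthogonalSequence

section Functional

variable {L : K[X] →ₗ[K] K} (hP : IsOrthogonalSequence L P h)
include hP

lemma natDegree_le {n k : ℕ} (hnk : n ≤ k) : (P n).natDegree ≤ k := by
  rw [hP.natDegree_eq]
  exact hnk

lemma coeff_self (n : ℕ) : (P n).coeff n = 1 := by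
  simpa [hP.natDegree_eq] using (hP.monic n).coeff_natDegree

lemma coeff_eq_zero_of_lt {n k : ℕ} (hk : n < k) : (P n).coeff k = 0 :=
  coeff_eq_zero_of_natDegree_lt (by rw [hP.natDegree_eq]; exact hk)

lemma apply_mul_self (n : ℕ) : L (P n * P n) = h n := by
  simp [hP.apply_mul]

lemma apply_mul_of_ne {m n : ℕ} (hmn : m ≠ n) : L (P m * P n) = 0 := by
  simp [hP.apply_mul, hmn]

lemma degree_sub_C_mul_lt {q : K[X]} {N : ℕ} (hq : q.degree < ↑(N + 1)) :
    (q - C (q.coeff N) * P N).degree < N := by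
  rw [degree_lt_iff_coeff_zero] at hq ⊢
  intro k hk
  rcases hk.eq_or_lt with rfl | hk
  · simp [hP.coeff_self]
  · simp [hq k hk, hP.coeff_eq_zero_of_lt hk]

lemma apply_mul_eq_zero_of_degree_lt {q : K[X]} {m : ℕ} (hq : q.degree < m) :
    L (q * P m) = 0 := by
  suffices ∀ N : ℕ, ∀ q : K[X], q.degree < N → N ≤ m → L (q * P m) = 0 from this m q hq le_rfl
  intro N
  induction N with
  | zero =>
    intro q hq _
    have hq0 : q = 0 := ext fun k => by
      simpa using (degree_lt_iff_coeff_zero q 0).1 hq k k.zero_le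
    rw [hq0, zero_mul, map_zero]
  | succ N ih =>
    intro q hq hN
    have hsplit : q * P m = (q - C (q.coeff N) * P N) * P m + q.coeff N • (P N * P m) := by
      rw [smul_eq_C_mul]
      ring
    rw [hsplit, map_add, map_smul, ih _ (hP.degree_sub_C_mul_lt hq) (by omega),
      hP.apply_mul_of_ne (by omega), smul_zero, add_zero]

lemma apply_mul_eq_coeff_mul {q : K[X]} {m : ℕ} (hq : q.natDegree ≤ m) :
    L (q * P m) = q.coeff m * h m := by
  have hsplit : q * P m = (q - C (q.coeff m) * P m) * P m + q.coeff m • (P m * P m) := by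
    rw [smul_eq_C_mul]
    ring
  have hdeg : q.degree < ↑(m + 1) :=
    (degree_lt_iff_coeff_zero _ _).2 fun k hk => coeff_eq_zero_of_natDegree_lt (by omega)
  rw [hsplit, map_add, map_smul, hP.apply_mul_eq_zero_of_degree_lt (hP.degree_sub_C_mul_lt hdeg),
    hP.apply_mul_self, zero_add, smul_eq_mul]

lemma apply_derivative_mul_eq_zero {n m : ℕ} (hnm : n ≤ m) :
    L (derivative (P n) * P m) = 0 := by
  rw [hP.apply_mul_eq_coeff_mul
      ((natDegree_derivative_le _).trans (by rw [hP.natDegree_eq]; omega)),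
    coeff_derivative, hP.coeff_eq_zero_of_lt (by omega), zero_mul, zero_mul]

lemma apply_X_mul_mul_of_le {n m : ℕ} (hnm : n + 1 ≤ m) :
    L (X * P n * P m) = (P n).coeff (m - 1) * h m := by
  obtain ⟨k, rfl⟩ : ∃ k, m = k + 1 := ⟨m - 1, by omega⟩
  rw [hP.apply_mul_eq_coeff_mul
      (natDegree_mul_le.trans (by have := natDegree_X_le (R := K); rw [hP.natDegree_eq]; omega)),
    coeff_X_mul, Nat.add_sub_cancel]

lemma apply_derivative_mul_self (n : ℕ) : L (derivative (P n * P n)) = 0 := by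
  rw [derivative_mul, map_add, mul_comm (P n), hP.apply_derivative_mul_eq_zero le_rfl, add_zero]

lemma apply_derivative_succ_mul (n : ℕ) : L (derivative (P (n + 1) * P n)) = (n + 1) * h n := by
  have hdeg : (derivative (P (n + 1))).natDegree ≤ n :=
    (natDegree_derivative_le _).trans (by rw [hP.natDegree_eq]; omega)
  rw [derivative_mul, map_add, hP.apply_mul_eq_coeff_mul hdeg, mul_comm (P (n + 1)),
    hP.apply_derivative_mul_eq_zero n.le_succ, coeff_derivative, hP.coeff_self]
  ring

variable (hrec : IsThreeTermRecurrence P α β)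
include hrec

lemma apply_X_mul_mul_self (n : ℕ) : L (X * P n * P n) = α n * h n := by
  rw [hrec.map_X_mul_mul, hP.apply_mul_of_ne n.succ_ne_self, hP.apply_mul_self]
  cases n with
  | zero => simp [hrec.beta_zero]
  | succ n => simp [hP.apply_mul_of_ne n.succ_ne_self.symm]

lemma apply_X_mul_succ_mul (n : ℕ) : L (X * P (n + 1) * P n) = β (n + 1) * h n := by
  rw [hrec.map_X_mul_mul, hP.apply_mul_of_ne (by omega), hP.apply_mul_of_ne (by omega),
    Nat.add_sub_cancel, hP.apply_mul_self]
  ring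

lemma h_succ_eq_beta_mul (n : ℕ) : h (n + 1) = β (n + 1) * h n := by
  rw [← hP.apply_X_mul_succ_mul hrec, mul_right_comm, hP.apply_X_mul_mul_of_le le_rfl,
    Nat.add_sub_cancel, hP.coeff_self, one_mul]

lemma apply_X_sq_mul_self (n : ℕ) :
    L (X ^ 2 * (P n * P n)) = (β (n + 1) + α n ^ 2 + β n) * h n := by
  have hpred : β n * L (X * P n * P (n - 1)) = β n * h n := by
    cases n with
    | zero => simp [hrec.beta_zero]
    | succ n => rw [Nat.add_sub_cancel, hP.apply_X_mul_succ_mul hrec, ← hP.h_succ_eq_beta_mul hrec]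
  calc L (X ^ 2 * (P n * P n)) = L (X * P n * (X * P n)) := by ring_nf
    _ = L (X * P n * P (n + 1)) + α n * L (X * P n * P n) + β n * L (X * P n * P (n - 1)) := by
        rw [hrec.map_X_mul_mul]
        simp only [mul_comm (P _)]
    _ = (β (n + 1) + α n ^ 2 + β n) * h n := by
        rw [hP.apply_X_mul_mul_of_le le_rfl, Nat.add_sub_cancel, hP.coeff_self, hpred,
          hP.apply_X_mul_mul_self hrec, hP.h_succ_eq_beta_mul hrec]
        ring

lemma apply_X_sq_mul_succ_mul (n : ℕ) :
    L (X ^ 2 * (P (n + 1) * P n)) = (α (n + 1) + α n) * β (n + 1) * h n := by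
  calc L (X ^ 2 * (P (n + 1) * P n)) = L (X * P (n + 1) * (X * P n)) := by ring_nf
    _ = L (X * P n * P (n + 2)) + α (n + 1) * L (X * P n * P (n + 1))
        + β (n + 1) * L (X * P n * P n) := by
        rw [hrec.map_X_mul_mul, Nat.add_sub_cancel]
        simp only [mul_comm (P _)]
    _ = (α (n + 1) + α n) * β (n + 1) * h n := by
        rw [hP.apply_X_mul_mul_of_le (by omega), hP.apply_X_mul_mul_of_le le_rfl,
          hP.coeff_eq_zero_of_lt (by omega), Nat.add_sub_cancel, hP.coeff_self,
          hP.apply_X_mul_mul_self hrec, hP.h_succ_eq_beta_mul hrec n]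
        ring

end Functional

section MomentFamily

variable {L : ℕ → K[X] →ₗ[K] K} {lam t : K} (hP : IsOrthogonalSequence (L 0) P h)
  (hrec : IsThreeTermRecurrence P α β) (hshift : ∀ k p, L (k + 1) (X * p) = L k p)
  (hpearson : ∀ p, L 0 (derivative p) + lam * L 1 p + t * L 2 p = 3 * L 0 (X ^ 2 * p))
include hP

section Shift

include hshift

lemma map_one_mul {a : K[X]} {m : ℕ} (ha : a.natDegree ≤ m + 1) :
    L 1 (a * P m) = a.coeff (m + 1) * h m + a.coeff 0 * L 1 (P m) := by
  rw [map_succ_mul_eq_divX hshift,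
    hP.apply_mul_eq_coeff_mul (by rw [natDegree_divX_eq_natDegree_tsub_one]; omega), coeff_divX]

lemma map_two_mul {a : K[X]} {m : ℕ} (ha : a.natDegree ≤ m + 2) :
    L 2 (a * P m) = a.coeff (m + 2) * h m + a.coeff 1 * L 1 (P m) + a.coeff 0 * L 2 (P m) := by
  rw [map_succ_mul_eq_divX hshift 1,
    hP.map_one_mul hshift (by rw [natDegree_divX_eq_natDegree_tsub_one]; omega), coeff_divX,
    coeff_divX]

/-- Both sides equal `P_{m+1}(0) P_m(0) L₁(P_{m+1}) L₁(P_m)`: peel `X` off the factor of lower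
degree and use orthogonality. -/
lemma map_one_succ_mul_mul_sub (m : ℕ) :
    L 1 (P (m + 1) * P m) * (L 1 (P (m + 1) * P m) - h m)
      = L 1 (P (m + 1) * P (m + 1)) * L 1 (P m * P m) := by
  have e1 := hP.map_one_mul hshift (hP.natDegree_le (by omega : m ≤ m + 1 + 1))
  have e2 := hP.map_one_mul hshift (hP.natDegree_le (le_refl (m + 1)))
  have e3 := hP.map_one_mul hshift (hP.natDegree_le (by omega : m + 1 ≤ m + 1 + 1))
  have e4 := hP.map_one_mul hshift (hP.natDegree_le (by omega : m ≤ m + 1))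
  rw [hP.coeff_eq_zero_of_lt (by omega), mul_comm (P m)] at e1
  rw [hP.coeff_self] at e2
  rw [hP.coeff_eq_zero_of_lt (by omega)] at e3 e4
  linear_combination (L 1 (P (m + 1) * P m) - h m) * e1
    + (P m).coeff 0 * L 1 (P (m + 1)) * e2 - L 1 (P m * P m) * e3
    - (P (m + 1)).coeff 0 * L 1 (P (m + 1)) * e4

lemma map_two_succ_mul (m : ℕ) :
    (2 * L 1 (P (m + 1) * P m) - h m) * L 2 (P (m + 1) * P m)
      = L 1 (P (m + 1) * P (m + 1)) * L 2 (P m * P m)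
        + L 1 (P m * P m) * L 2 (P (m + 1) * P (m + 1)) := by
  have e1 := hP.map_one_mul hshift (hP.natDegree_le (by omega : m ≤ m + 1 + 1))
  have e2 := hP.map_one_mul hshift (hP.natDegree_le (le_refl (m + 1)))
  have e3 := hP.map_one_mul hshift (hP.natDegree_le (by omega : m + 1 ≤ m + 1 + 1))
  have e4 := hP.map_one_mul hshift (hP.natDegree_le (by omega : m ≤ m + 1))
  have f1 := hP.map_two_mul hshift (hP.natDegree_le (by omega : m ≤ m + 1 + 2))
  have f2 := hP.map_two_mul hshift (hP.natDegree_le (by omega : m + 1 ≤ m + 2))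
  have f3 := hP.map_two_mul hshift (hP.natDegree_le (by omega : m + 1 ≤ m + 1 + 2))
  have f4 := hP.map_two_mul hshift (hP.natDegree_le (by omega : m ≤ m + 2))
  rw [hP.coeff_eq_zero_of_lt (by omega), mul_comm (P m)] at e1 f1
  rw [hP.coeff_self] at e2
  rw [hP.coeff_eq_zero_of_lt (by omega)] at e3 e4 f2 f3 f4
  linear_combination L 2 (P (m + 1) * P m) * e1 + (P m).coeff 0 * L 1 (P (m + 1)) * f2
    + L 2 (P (m + 1) * P m) * e2 + (P (m + 1)).coeff 0 * L 1 (P m) * f1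
    - L 2 (P m * P m) * e3 - (P (m + 1)).coeff 0 * L 1 (P (m + 1)) * f4
    - L 2 (P (m + 1) * P (m + 1)) * e4 - (P m).coeff 0 * L 1 (P m) * f3

end Shift

section Pearson

include hrec hpearson

lemma pearson_mul_self (m : ℕ) :
    lam * L 1 (P m * P m) + t * L 2 (P m * P m) = ladderR α β m * h m := by
  have hm := hpearson (P m * P m)
  rw [hP.apply_derivative_mul_self, hP.apply_X_sq_mul_self hrec] at hm
  rw [ladderR]
  linear_combination hm

lemma pearson_succ_mul (m : ℕ) :
    lam * L 1 (P (m + 1) * P m) + t * L 2 (P (m + 1) * P m) = ladderr α β (m + 1) * h m := by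
  have hm := hpearson (P (m + 1) * P m)
  rw [hP.apply_derivative_succ_mul, hP.apply_X_sq_mul_succ_mul hrec] at hm
  rw [ladderr, Nat.add_sub_cancel]
  push_cast
  linear_combination hm

lemma beta_mul_pearson_mul_pred (m : ℕ) :
    β m * (lam * L 1 (P m * P (m - 1)) + t * L 2 (P m * P (m - 1))) = ladderr α β m * h m := by
  cases m with
  | zero => simp [ladderr, hrec.beta_zero]
  | succ m =>
    rw [Nat.add_sub_cancel, hP.pearson_succ_mul hrec hpearson, hP.h_succ_eq_beta_mul hrec]
    ring

end Pearson

include hrec hshift hpearson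

/-- `λ` times the case `k = 0` plus `t` times the case `k = 1` of `map_succ_mul_self` is a sum of
Pearson moments. -/
lemma ladder_mul_apply_self (m : ℕ) :
    (ladderr α β m + ladderr α β (m + 1) + α m * ladderR α β m - lam) * h m
      = t * L 1 (P m * P m) := by
  have e0 := hrec.map_succ_mul_self hshift 0 m
  have e1 := hrec.map_succ_mul_self hshift 1 m
  rw [hP.apply_mul_self] at e0
  linear_combination lam * e0 + t * e1 - hP.pearson_succ_mul hrec hpearson m
    - α m * hP.pearson_mul_self hrec hpearson m - hP.beta_mul_pearson_mul_pred hrec hpearson m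

variable [IsDomain K]

lemma ladder_mul_apply_succ_mul {m : ℕ} (hm : h m ≠ 0) :
    (2 * ladderr α β (m + 1) - lam) * L 1 (P (m + 1) * P m) - ladderr α β (m + 1) * h m
      = L 1 (P (m + 1) * P (m + 1)) * ladderR α β m
        + β (m + 1) * L 1 (P m * P m) * ladderR α β (m + 1) := by
  refine mul_right_cancel₀ hm ?_
  linear_combination (h m - 2 * L 1 (P (m + 1) * P m)) * hP.pearson_succ_mul hrec hpearson m
    + L 1 (P m * P m) * hP.pearson_mul_self hrec hpearson (m + 1)
    + L 1 (P (m + 1) * P (m + 1)) * hP.pearson_mul_self hrec hpearson m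
    + L 1 (P m * P m) * ladderR α β (m + 1) * hP.h_succ_eq_beta_mul hrec m
    + 2 * lam * hP.map_one_succ_mul_mul_sub hshift m + t * hP.map_two_succ_mul hshift m

/-- With `v = L₁(P_{m+1} P_m)` and `u_j = L₁(P_j²)`, the two factors on the left are
`t (2 r_{m+1} - λ) v / h_m` and `t (2 r_{m+1} - λ) (v - h_m) / h_m`, while
`v (v - h_m) = u_{m+1} u_m` and `t u_j = S_j h_j`. -/
theorem third_order_equation {m : ℕ} (hm : h m ≠ 0) :
    ((ladderr α β (m + 1) + ladderr α β (m + 1 + 1) + α (m + 1) * ladderR α β (m + 1) - lam)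
          * β (m + 1) * ladderR α β m
        + (ladderr α β m + ladderr α β (m + 1) + α m * ladderR α β m - lam)
          * β (m + 1) * ladderR α β (m + 1) + t * ladderr α β (m + 1))
      * ((ladderr α β (m + 1) + ladderr α β (m + 1 + 1) + α (m + 1) * ladderR α β (m + 1) - lam)
          * β (m + 1) * ladderR α β m
        + (ladderr α β m + ladderr α β (m + 1) + α m * ladderR α β m - lam)
          * β (m + 1) * ladderR α β (m + 1) - t * ladderr α β (m + 1) + lam * t)
      = β (m + 1) * (2 * ladderr α β (m + 1) - lam) ^ 2
          * (ladderr α β (m + 1) + ladderr α β (m + 1 + 1) + α (m + 1) * ladderR α β (m + 1) - lam)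
          * (ladderr α β m + ladderr α β (m + 1) + α m * ladderR α β m - lam) := by
  have hS := hP.ladder_mul_apply_self hrec hshift hpearson (m + 1)
  have hT := hP.ladder_mul_apply_self hrec hshift hpearson m
  have hnorm := hP.h_succ_eq_beta_mul hrec m
  have hE := hP.ladder_mul_apply_succ_mul hrec hshift hpearson hm
  have hG := hP.map_one_succ_mul_mul_sub hshift m
  set r := ladderr α β
  set R := ladderR α β
  set S := r (m + 1) + r (m + 1 + 1) + α (m + 1) * R (m + 1) - lam
  set T := r m + r (m + 1) + α m * R m - lam
  set v := L 1 (P (m + 1) * P m)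
  have hX : (S * β (m + 1) * R m + T * β (m + 1) * R (m + 1) + t * r (m + 1)) * h m
      = t * (2 * r (m + 1) - lam) * v := by
    linear_combination R m * hS + β (m + 1) * R (m + 1) * hT - S * R m * hnorm - t * hE
  have hY : (S * β (m + 1) * R m + T * β (m + 1) * R (m + 1) - t * r (m + 1) + lam * t) * h m
      = t * (2 * r (m + 1) - lam) * (v - h m) := by
    linear_combination hX
  refine mul_right_cancel₀ (pow_ne_zero 2 hm) ?_
  linear_combination (S * β (m + 1) * R m + T * β (m + 1) * R (m + 1) - t * r (m + 1) + lam * t)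
      * h m * hX + t * (2 * r (m + 1) - lam) * v * hY + t ^ 2 * (2 * r (m + 1) - lam) ^ 2 * hG
    - (2 * r (m + 1) - lam) ^ 2 * (t * L 1 (P m * P m) * hS + S * h (m + 1) * hT
      - S * T * h m * hnorm)

end MomentFamily

end IsOrthogonalSequence

end Algebra

lemma exp_neg_div_le_factorial_mul_pow {t x : ℝ} (ht : 0 < t) (hx : 0 < x) (m : ℕ) :
    exp (-(t / x)) ≤ m ! * (x / t) ^ m := by
  have h := pow_div_factorial_le_exp (t / x) (by positivity) m
  rw [exp_neg, inv_le_comm₀ (exp_pos _) (by positivity)]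
  calc (m ! * (x / t) ^ m)⁻¹ = (t / x) ^ m / m ! := by rw [← inv_div t x, inv_pow]; field_simp
    _ ≤ exp (t / x) := h

lemma exp_neg_pow_three_le {x : ℝ} (hx : 0 ≤ x) : exp (-x ^ 3) ≤ exp 1 * exp (-x) := by
  rw [← exp_add, exp_le_exp]
  nlinarith [sq_nonneg (x - 1), mul_nonneg hx (sq_nonneg (x - 1))]

lemma integrableOn_rpow_mul_exp_neg_pow_three_sub_div {t : ℝ} (ht : 0 < t) (c : ℝ) :
    IntegrableOn (fun x => x ^ c * exp (-x ^ 3 - t / x)) (Ioi 0) := by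
  set m := ⌈-c⌉₊
  have hm : 0 < c + m + 1 := by linarith [Nat.le_ceil (-c)]
  refine ((GammaIntegral_convergent hm).const_mul (exp 1 * m ! / t ^ m)).mono' ?_ ?_
  · refine ContinuousOn.aestronglyMeasurable ?_ measurableSet_Ioi
    exact ContinuousOn.mul
      (fun x hx => (continuousAt_rpow_const x c (.inl (ne_of_gt hx))).continuousWithinAt)
      (by fun_prop (disch := exact fun x hx => ne_of_gt hx))
  · filter_upwards [ae_restrict_mem measurableSet_Ioi] with x (hx : 0 < x)
    rw [norm_of_nonneg (by positivity)]
    calc x ^ c * exp (-x ^ 3 - t / x) = x ^ c * (exp (-x ^ 3) * exp (-(t / x))) := by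
          rw [← exp_add, sub_eq_add_neg]
      _ ≤ x ^ c * ((exp 1 * exp (-x)) * (m ! * (x / t) ^ m)) := by
          gcongr
          exacts [exp_neg_pow_three_le hx.le, exp_neg_div_le_factorial_mul_pow ht hx m]
      _ = exp 1 * m ! / t ^ m * (exp (-x) * x ^ (c + m + 1 - 1)) := by
          rw [add_sub_cancel_right, rpow_add hx, rpow_natCast, div_pow]
          field_simp

lemma tendsto_rpow_mul_exp_neg_pow_three_sub_div_atTop {t : ℝ} (ht : 0 ≤ t) (c : ℝ) :
    Tendsto (fun x => x ^ c * exp (-x ^ 3 - t / x)) atTop (𝓝 0) := by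
  have hlim := (tendsto_rpow_mul_exp_neg_mul_atTop_nhds_zero c 1 one_pos).const_mul (exp 1)
  rw [mul_zero] at hlim
  refine squeeze_zero' ?_ ?_ hlim
  · filter_upwards [eventually_gt_atTop 0] with x hx using by positivity
  · filter_upwards [eventually_gt_atTop 0] with x hx
    calc x ^ c * exp (-x ^ 3 - t / x) ≤ x ^ c * (exp 1 * exp (-x)) := by
          gcongr
          refine (exp_le_exp.2 ?_).trans (exp_neg_pow_three_le hx.le)
          linarith [div_nonneg ht hx.le]
      _ = exp 1 * (x ^ c * exp (-1 * x)) := by ring_nf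

lemma tendsto_rpow_mul_exp_neg_pow_three_sub_div_nhdsGT_zero {t : ℝ} (ht : 0 < t) (c : ℝ) :
    Tendsto (fun x => x ^ c * exp (-x ^ 3 - t / x)) (𝓝[>] 0) (𝓝 0) := by
  have hlim :=
    (tendsto_rpow_mul_exp_neg_mul_atTop_nhds_zero (-c) t ht).comp tendsto_inv_nhdsGT_zero
  refine squeeze_zero' ?_ ?_ hlim
  · filter_upwards [self_mem_nhdsWithin] with x (hx : 0 < x) using by positivity
  · filter_upwards [self_mem_nhdsWithin] with x (hx : 0 < x)
    rw [Function.comp_apply, inv_rpow hx.le, rpow_neg hx.le, inv_inv, ← div_eq_mul_inv, neg_div]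
    gcongr
    linarith [pow_pos hx 3]

lemma eval_mul_rpow_eq_sum (p : ℝ[X]) {x : ℝ} (hx : 0 < x) (c : ℝ) :
    p.eval x * x ^ c = ∑ i ∈ Finset.range (p.natDegree + 1), p.coeff i * x ^ (c + i) := by
  rw [eval_eq_sum_range, Finset.sum_mul]
  refine Finset.sum_congr rfl fun i _ => ?_
  rw [rpow_add hx, rpow_natCast]
  ring

noncomputable def airyWeight (lam t x : ℝ) : ℝ := x ^ lam * exp (-x ^ 3 - t / x)

lemma eval_mul_airyWeight_div_pow_eq_sum (lam t : ℝ) (p : ℝ[X]) (k : ℕ) {x : ℝ} (hx : 0 < x) :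
    p.eval x * airyWeight lam t x / x ^ k
      = ∑ i ∈ Finset.range (p.natDegree + 1),
          p.coeff i * (x ^ (lam - k + i) * exp (-x ^ 3 - t / x)) := by
  simp only [← mul_assoc, ← Finset.sum_mul, ← eval_mul_rpow_eq_sum p hx, airyWeight,
    rpow_sub_natCast hx.ne']
  ring

lemma integrableOn_eval_mul_airyWeight_div_pow (lam : ℝ) {t : ℝ} (ht : 0 < t) (p : ℝ[X])
    (k : ℕ) : IntegrableOn (fun x => p.eval x * airyWeight lam t x / x ^ k) (Ioi 0) := by
  refine IntegrableOn.congr_fun ?_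
    (fun x hx => (eval_mul_airyWeight_div_pow_eq_sum lam t p k hx).symm) measurableSet_Ioi
  exact integrable_finsetSum _ fun i _ =>
    (integrableOn_rpow_mul_exp_neg_pow_three_sub_div ht _).const_mul _

lemma tendsto_eval_mul_airyWeight {lam t : ℝ} {l : Filter ℝ} (hl : ∀ᶠ x in l, 0 < x)
    (hlim : ∀ c : ℝ, Tendsto (fun x => x ^ c * exp (-x ^ 3 - t / x)) l (𝓝 0)) (p : ℝ[X]) :
    Tendsto (fun x => p.eval x * airyWeight lam t x) l (𝓝 0) := by
  have hsum := tendsto_finsetSum (Finset.range (p.natDegree + 1))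
    fun i _ => (hlim (lam + i)).const_mul (p.coeff i)
  simp only [mul_zero, Finset.sum_const_zero] at hsum
  refine hsum.congr' ?_
  filter_upwards [hl] with x hx
  rw [airyWeight, ← mul_assoc, eval_mul_rpow_eq_sum p hx, Finset.sum_mul]
  simp only [mul_assoc]

lemma hasDerivAt_airyWeight (lam t : ℝ) {x : ℝ} (hx : 0 < x) :
    HasDerivAt (airyWeight lam t) (airyWeight lam t x * (lam / x - 3 * x ^ 2 + t / x ^ 2)) x := by
  have hpow : HasDerivAt (fun y => y ^ lam) (lam * x ^ (lam - 1)) x :=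
    hasDerivAt_rpow_const (.inl hx.ne')
  have hexp : HasDerivAt (fun y => exp (-y ^ 3 - t / y))
      (exp (-x ^ 3 - t / x) * (-(3 * x ^ 2) - t * -(x ^ 2)⁻¹)) x := by
    refine HasDerivAt.exp ?_
    simp only [div_eq_mul_inv]
    exact (hasDerivAt_pow 3 x).neg.sub ((hasDerivAt_inv hx.ne').const_mul t)
  refine (hpow.mul hexp).congr_deriv ?_
  rw [airyWeight, rpow_sub_one hx.ne']
  field_simp
  ring

noncomputable def airyMoment (lam : ℝ) {t : ℝ} (ht : 0 < t) (k : ℕ) : ℝ[X] →ₗ[ℝ] ℝ where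
  toFun p := ∫ x in Ioi 0, p.eval x * airyWeight lam t x / x ^ k
  map_add' p q := by
    simp only [eval_add, add_mul, add_div]
    exact integral_add (integrableOn_eval_mul_airyWeight_div_pow lam ht p k)
      (integrableOn_eval_mul_airyWeight_div_pow lam ht q k)
  map_smul' a p := by
    simp only [eval_smul, smul_eq_mul, mul_assoc, mul_div_assoc, RingHom.id_apply]
    exact integral_const_mul a _

lemma airyMoment_apply (lam : ℝ) {t : ℝ} (ht : 0 < t) (k : ℕ) (p : ℝ[X]) :
    airyMoment lam ht k p = ∫ x in Ioi 0, p.eval x * airyWeight lam t x / x ^ k := rfl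

lemma airyMoment_zero_apply (lam : ℝ) {t : ℝ} (ht : 0 < t) (p : ℝ[X]) :
    airyMoment lam ht 0 p = ∫ x in Ioi 0, p.eval x * airyWeight lam t x := by
  simp [airyMoment_apply]

lemma airyMoment_succ_X_mul (lam : ℝ) {t : ℝ} (ht : 0 < t) (k : ℕ) (p : ℝ[X]) :
    airyMoment lam ht (k + 1) (X * p) = airyMoment lam ht k p := by
  refine setIntegral_congr_fun measurableSet_Ioi fun x (hx : 0 < x) => ?_
  simp only [eval_mul, eval_X, pow_succ]
  field_simp

theorem airyMoment_pearson (lam : ℝ) {t : ℝ} (ht : 0 < t) (p : ℝ[X]) :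
    airyMoment lam ht 0 (derivative p) + lam * airyMoment lam ht 1 p + t * airyMoment lam ht 2 p
      = 3 * airyMoment lam ht 0 (X ^ 2 * p) := by
  set q : ℝ[X] := lam • (X * p) + t • p - (3 : ℝ) • (X ^ 2 * (X ^ 2 * p))
  have hq : airyMoment lam ht 2 q
      = lam * airyMoment lam ht 1 p + t * airyMoment lam ht 2 p
        - 3 * airyMoment lam ht 0 (X ^ 2 * p) := by
    simp only [q, map_sub, map_add, map_smul, smul_eq_mul, airyMoment_succ_X_mul,
      pow_two X, mul_assoc]
  have hgrad : EqOn (fun x => p.eval x * (airyWeight lam t x * (lam / x - 3 * x ^ 2 + t / x ^ 2)))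
      (fun x => q.eval x * airyWeight lam t x / x ^ 2) (Ioi 0) := by
    intro x (hx : 0 < x)
    simp only [q, eval_sub, eval_add, eval_smul, eval_mul, eval_pow, eval_X, smul_eq_mul]
    field_simp
    ring
  have hibp := integral_Ioi_mul_deriv_eq_deriv_mul (u := fun x => p.eval x)
    (fun x _ => p.hasDerivAt x) (fun x hx => hasDerivAt_airyWeight lam t hx)
    ((integrableOn_eval_mul_airyWeight_div_pow lam ht q 2).congr_fun hgrad.symm measurableSet_Ioi)
    (by simpa [Pi.mul_def] using integrableOn_eval_mul_airyWeight_div_pow lam ht (derivative p) 0)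
    (tendsto_eval_mul_airyWeight self_mem_nhdsWithin
      (tendsto_rpow_mul_exp_neg_pow_three_sub_div_nhdsGT_zero ht) p)
    (tendsto_eval_mul_airyWeight (eventually_gt_atTop 0)
      (tendsto_rpow_mul_exp_neg_pow_three_sub_div_atTop ht.le) p)
  rw [setIntegral_congr_fun measurableSet_Ioi hgrad] at hibp
  rw [← airyMoment_apply lam ht, hq, ← airyMoment_zero_apply lam ht] at hibp
  linarith

theorem stmt_11_general
    (lam t : ℝ) (ht : 0 < t)
    (w : ℝ → ℝ)
    (hw : ∀ x : ℝ, 0 < x → w x = x ^ lam * Real.exp (-x ^ 3 - t / x))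
    (P : ℕ → Polynomial ℝ) (h : ℕ → ℝ) (α β : ℕ → ℝ)
    (hP : ∀ n, (P n).Monic ∧ (P n).natDegree = n)
    (hpos : ∀ n, 0 < h n)
    (horth : ∀ m n, ∫ x in Set.Ioi (0 : ℝ),
        (P m).eval x * (P n).eval x * w x = if m = n then h n else 0)
    (hrec : ∀ n, 1 ≤ n → ∀ x : ℝ, x * (P n).eval x
        = (P (n + 1)).eval x + α n * (P n).eval x + β n * (P (n - 1)).eval x)
    (hrec0 : ∀ x : ℝ, x * (P 0).eval x = (P 1).eval x + α 0 * (P 0).eval x)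
    (hβ0 : β 0 = 0)
    (R : ℕ → ℝ) (hR : ∀ m : ℕ, R m = 3 * ((α m) ^ 2 + β m + β (m + 1)))
    (r : ℕ → ℝ)
    (hr : ∀ m : ℕ, r m = 3 * (α m + α (m - 1)) * β m - (m : ℝ))
    : ∀ n : ℕ, 1 ≤ n →
      ((r n + r (n + 1) + α n * R n - lam) * β n * R (n - 1)
          + (r (n - 1) + r n + α (n - 1) * R (n - 1) - lam) * β n * R n + t * r n)
        * ((r n + r (n + 1) + α n * R n - lam) * β n * R (n - 1)
          + (r (n - 1) + r n + α (n - 1) * R (n - 1) - lam) * β n * R n - t * r n + lam * t)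
      = β n * (2 * r n - lam) ^ 2 * (r n + r (n + 1) + α n * R n - lam)
          * (r (n - 1) + r n + α (n - 1) * R (n - 1) - lam) := by
  have hortho : IsOrthogonalSequence (airyMoment lam ht 0) P h :=
    { monic := fun n => (hP n).1
      natDegree_eq := fun n => (hP n).2
      apply_mul := fun m n => by
        rw [airyMoment_zero_apply, ← horth m n]
        refine setIntegral_congr_fun measurableSet_Ioi fun x hx => ?_
        rw [eval_mul, hw x hx, airyWeight] }
  have hthree : IsThreeTermRecurrence P α β :=
    { beta_zero := hβ0
      X_mul := fun n => Polynomial.funext fun x => by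
        rcases n with _ | n
        · simpa [hβ0] using hrec0 x
        · simpa using hrec (n + 1) n.succ_pos x }
  obtain rfl : R = ladderR α β := funext hR
  obtain rfl : r = ladderr α β := funext hr
  intro n hn
  obtain ⟨m, rfl⟩ := Nat.exists_eq_add_of_le' hn
  simpa using hortho.third_order_equation hthree (airyMoment_succ_X_mul lam ht)
    (airyMoment_pearson lam ht) (hpos m).ne'

theorem stmt_11
    (lam t : ℝ) (hlam : -1 < lam) (ht : 0 < t)
    (w : ℝ → ℝ)
    (hw : ∀ x : ℝ, 0 < x → w x = x ^ lam * Real.exp (-x ^ 3 - t / x))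
    (P : ℕ → Polynomial ℝ) (h : ℕ → ℝ) (α β : ℕ → ℝ)
    (hP : ∀ n, (P n).Monic ∧ (P n).natDegree = n)
    (hpos : ∀ n, 0 < h n)
    (horth : ∀ m n, ∫ x in Set.Ioi (0 : ℝ),
        (P m).eval x * (P n).eval x * w x = if m = n then h n else 0)
    (hP0 : P 0 = 1)
    (hrec : ∀ n, 1 ≤ n → ∀ x : ℝ, x * (P n).eval x
        = (P (n + 1)).eval x + α n * (P n).eval x + β n * (P (n - 1)).eval x)
    (hrec0 : ∀ x : ℝ, x * (P 0).eval x = (P 1).eval x + α 0 * (P 0).eval x)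
    (hβ0 : β 0 = 0)
    (R : ℕ → ℝ) (hR : ∀ m : ℕ, R m = 3 * ((α m) ^ 2 + β m + β (m + 1)))
    (r : ℕ → ℝ)
    (hr : ∀ m : ℕ, r m = 3 * (α m + α (m - 1)) * β m - (m : ℝ))
    : ∀ n : ℕ, 1 ≤ n →
      ((r n + r (n + 1) + α n * R n - lam) * β n * R (n - 1)
          + (r (n - 1) + r n + α (n - 1) * R (n - 1) - lam) * β n * R n + t * r n)
        * ((r n + r (n + 1) + α n * R n - lam) * β n * R (n - 1)
          + (r (n - 1) + r n + α (n - 1) * R (n - 1) - lam) * β n * R n - t * r n + lam * t)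
      = β n * (2 * r n - lam) ^ 2 * (r n + r (n + 1) + α n * R n - lam)
          * (r (n - 1) + r n + α (n - 1) * R (n - 1) - lam) :=
  stmt_11_general lam t ht w hw P h α β hP hpos horth hrec hrec0 hβ0 R hR r hr
end

section
/- For every n ≥ 2, the recurrence coefficient β_n(t) satisfies the differential-difference equation t β_n'(t) = β_n [2 + 3α_{n−2} β_{n−1} − 3α_{n+1} β_{n+1} + 3α_{n−1}(α_{n−1}² + β_n + 2β_{n−1}) − 3α_n(α_n² + β_n + 2β_{n+1})]. -/
/-!
Differentiating `w_s(x) = x^λ e^{-x³ - s/x}` in `s` divides it by `-x`; since the `s`-derivative of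
`P_n` has degree `< n` it is orthogonal to `P_n`, so `h_n' = -∫ P_n² w / x`. Integrating
`(x^{λ+1} P_n² w)'` by parts turns `s ∫ P_n² w / x` into `3 ∫ x³ P_n² w - (λ + 1 + 2n) h_n`, and the
recurrence evaluates `∫ x³ P_n² w` as `h_n` times the diagonal entry `D_n` of the cube of the Jacobi
matrix. Hence `t h_n' / h_n = λ + 1 + 2n - 3 D_n`, and `β_n = h_n / h_{n-1}` gives the equation.
That `h_n` is differentiable at all follows by induction on `n`: the moments are differentiable
in `s`, and `α_n`, `β_n` and the coefficients of `P_{n+1}` are rational in them.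
-/

open MeasureTheory Polynomial Real Filter Set Topology
open scoped Nat

section MomentFunctional

variable {R : Type*} [CommRing R]

noncomputable def momentFunctional (m : ℕ → R) : R[X] →ₗ[R] R :=
  lsum fun k => m k • LinearMap.id

variable (m : ℕ → R)

lemma momentFunctional_monomial (k : ℕ) (c : R) : momentFunctional m (monomial k c) = m k * c := by
  simp [momentFunctional, sum_monomial_index]

lemma momentFunctional_eq_sum {q : R[X]} {D : ℕ} (hq : q.natDegree ≤ D) :
    momentFunctional m q = ∑ k ∈ Finset.range (D + 1), m k * q.coeff k := by
  rw [momentFunctional, lsum_apply, sum_over_range' _ (fun _ => by simp) _ (Nat.lt_succ_of_le hq)]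
  rfl

lemma momentFunctional_neg (q : R[X]) :
    momentFunctional (fun k => -m k) q = -momentFunctional m q := by
  induction q using Polynomial.induction_on' with
  | add p q hp hq => rw [map_add, map_add, hp, hq, neg_add]
  | monomial k c => rw [momentFunctional_monomial, momentFunctional_monomial, neg_mul]

end MomentFunctional

lemma LinearMap.map_C_mul {R : Type*} [CommRing R] (L : R[X] →ₗ[R] R) (c : R) (p : R[X]) :
    L (C c * p) = c * L p := by
  rw [C_mul', map_smul, smul_eq_mul]

/-- The diagonal entry in row `n + 1` of the cube of the Jacobi matrix with diagonal `a` and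
off-diagonal products `b`. -/
def jacobiCubeDiag {R : Type*} [CommRing R] (a b : ℕ → R) (n : ℕ) : R :=
  a (n + 2) * b (n + 2) + 2 * a (n + 1) * b (n + 2) + a (n + 1) ^ 3 + 2 * a (n + 1) * b (n + 1)
    + a n * b (n + 1)

structure IsMonicOPS {R : Type*} [CommRing R] (L : R[X] →ₗ[R] R) (P : ℕ → R[X]) (h a b : ℕ → R) :
    Prop where
  monic : ∀ n, (P n).Monic
  natDegree_eq : ∀ n, (P n).natDegree = n
  orthogonal : ∀ m n, L (P m * P n) = if m = n then h n else 0
  recurrence_zero : X * P 0 = P 1 + C (a 0) * P 0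
  recurrence_succ : ∀ n, X * P (n + 1) = P (n + 2) + C (a (n + 1)) * P (n + 1) + C (b (n + 1)) * P n

namespace IsMonicOPS

variable {R : Type*} [CommRing R] {L : R[X] →ₗ[R] R} {P : ℕ → R[X]} {h a b : ℕ → R}
  (hP : IsMonicOPS L P h a b)
include hP

lemma map_mul_self (n : ℕ) : L (P n * P n) = h n := by
  rw [hP.orthogonal, if_pos rfl]

lemma map_mul_of_ne {m n : ℕ} (hmn : m ≠ n) : L (P m * P n) = 0 := by
  rw [hP.orthogonal, if_neg hmn]

lemma zero_eq_one : P 0 = 1 :=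
  (hP.monic 0).natDegree_eq_zero.mp (hP.natDegree_eq 0)

lemma coeff_self (n : ℕ) : (P n).coeff n = 1 := by
  simpa [hP.natDegree_eq] using (hP.monic n).coeff_natDegree

lemma degree_sub_C_coeff_mul_lt {q : R[X]} {d : ℕ} (hq : q.degree < ↑(d + 1)) :
    (q - C (q.coeff d) * P d).degree < d := by
  rw [degree_lt_iff_coeff_zero] at hq ⊢
  intro k hk
  rcases hk.eq_or_lt with rfl | hk
  · rw [coeff_sub, coeff_C_mul, hP.coeff_self, mul_one, sub_self]
  · have hPk : (P d).coeff k = 0 := coeff_eq_zero_of_natDegree_lt (by rwa [hP.natDegree_eq])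
    rw [coeff_sub, coeff_C_mul, hq k hk, hPk, mul_zero, sub_zero]

lemma map_mul_eq_zero_of_degree_lt {q : R[X]} {n : ℕ} (hq : q.degree < n) : L (q * P n) = 0 := by
  suffices ∀ d ≤ n, ∀ q : R[X], q.degree < d → L (q * P n) = 0 from this n le_rfl q hq
  intro d
  induction d with
  | zero =>
    intro _ q hq
    have hq0 : q = 0 := by
      ext k; exact (degree_lt_iff_coeff_zero q 0).1 hq k k.zero_le
    rw [hq0, zero_mul, map_zero]
  | succ d ih =>
    intro hd q hq
    have hsplit : q * P n = (q - C (q.coeff d) * P d) * P n + C (q.coeff d) * (P d * P n) := by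
      ring
    rw [hsplit, map_add, L.map_C_mul, ih (by omega) _ (hP.degree_sub_C_coeff_mul_lt hq),
      hP.map_mul_of_ne (by omega), mul_zero, add_zero]

lemma map_mul_of_natDegree_le {q : R[X]} {n : ℕ} (hq : q.natDegree ≤ n) :
    L (q * P n) = q.coeff n * h n := by
  have hq' : q.degree < ↑(n + 1) :=
    (degree_le_of_natDegree_le hq).trans_lt (by exact_mod_cast n.lt_succ_self)
  have hsplit : q * P n = (q - C (q.coeff n) * P n) * P n + C (q.coeff n) * (P n * P n) := by ring
  rw [hsplit, map_add, L.map_C_mul, hP.map_mul_self,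
    hP.map_mul_eq_zero_of_degree_lt (hP.degree_sub_C_coeff_mul_lt hq'), zero_add]

lemma natDegree_X_mul_le (n : ℕ) : (X * P n).natDegree ≤ n + 1 :=
  natDegree_mul_le.trans <| by
    rw [hP.natDegree_eq, add_comm]; exact add_le_add_right natDegree_X_le n

lemma map_X_mul_mul_self (n : ℕ) : L (X * P n * P n) = a n * h n := by
  cases n with
  | zero =>
    rw [hP.recurrence_zero, add_mul, map_add, mul_assoc, L.map_C_mul, hP.map_mul_self,
      hP.map_mul_of_ne one_ne_zero, zero_add]
  | succ n =>
    rw [hP.recurrence_succ, add_mul, add_mul, map_add, map_add, mul_assoc, mul_assoc, L.map_C_mul,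
      L.map_C_mul, hP.map_mul_self, hP.map_mul_of_ne (by omega), hP.map_mul_of_ne (by omega)]
    ring

lemma map_X_mul_mul_succ (n : ℕ) : L (X * P n * P (n + 1)) = h (n + 1) := by
  rw [hP.map_mul_of_natDegree_le (hP.natDegree_X_mul_le n), coeff_X_mul, hP.coeff_self, one_mul]

lemma map_X_mul_mul_eq_zero {i j : ℕ} (hij : i + 2 ≤ j) : L (X * P i * P j) = 0 :=
  hP.map_mul_eq_zero_of_degree_lt <| (degree_le_of_natDegree_le (hP.natDegree_X_mul_le i)).trans_lt
    (by exact_mod_cast hij)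

lemma b_succ_mul_h (n : ℕ) : b (n + 1) * h n = h (n + 1) := by
  rw [← hP.map_X_mul_mul_succ, mul_right_comm, hP.recurrence_succ, add_mul, add_mul, map_add,
    map_add, mul_assoc, mul_assoc, L.map_C_mul, L.map_C_mul, hP.map_mul_self,
    hP.map_mul_of_ne (by omega), hP.map_mul_of_ne (by omega)]
  ring

lemma map_mul_X_mul_succ (p : R[X]) (n : ℕ) :
    L (p * (X * P (n + 1)))
      = L (p * P (n + 2)) + a (n + 1) * L (p * P (n + 1)) + b (n + 1) * L (p * P n) := by
  rw [hP.recurrence_succ, mul_add, mul_add, map_add, map_add, mul_left_comm p, mul_left_comm p,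
    L.map_C_mul, L.map_C_mul]

lemma map_X_pow_three_mul_mul_self (n : ℕ) :
    L (X ^ 3 * P (n + 1) * P (n + 1)) = jacobiCubeDiag a b n * h (n + 1) := by
  have hswap (j : ℕ) : L (X * (X * P (n + 1)) * P j) = L (X * P j * (X * P (n + 1))) :=
    congrArg L (by ring)
  have e22 : L (X * P (n + 2) * P (n + 2)) = a (n + 2) * h (n + 2) := hP.map_X_mul_mul_self _
  have e21 : L (X * P (n + 2) * P (n + 1)) = h (n + 2) := by
    rw [mul_right_comm]; exact hP.map_X_mul_mul_succ _
  have e20 : L (X * P (n + 2) * P n) = 0 := by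
    rw [mul_right_comm]; exact hP.map_X_mul_mul_eq_zero le_rfl
  have e12 : L (X * P (n + 1) * P (n + 2)) = h (n + 2) := hP.map_X_mul_mul_succ _
  have e10 : L (X * P (n + 1) * P n) = h (n + 1) := by
    rw [mul_right_comm]; exact hP.map_X_mul_mul_succ _
  have e02 : L (X * P n * P (n + 2)) = 0 := hP.map_X_mul_mul_eq_zero le_rfl
  rw [show X ^ 3 * P (n + 1) * P (n + 1) = X * (X * P (n + 1)) * (X * P (n + 1)) by ring,
    hP.map_mul_X_mul_succ, hswap, hswap, hswap, hP.map_mul_X_mul_succ, hP.map_mul_X_mul_succ,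
    hP.map_mul_X_mul_succ, e22, e21, e20, e12, hP.map_X_mul_mul_self, e10, e02,
    hP.map_X_mul_mul_succ, hP.map_X_mul_mul_self, jacobiCubeDiag]
  linear_combination -(a (n + 2) + 2 * a (n + 1)) * hP.b_succ_mul_h (n + 1)
    + a n * b (n + 1) * hP.b_succ_mul_h n

lemma map_X_mul_derivative_mul_self (n : ℕ) : L (X * derivative (P n) * P n) = n * h n := by
  cases n with
  | zero => simp [hP.zero_eq_one]
  | succ n =>
    have hdeg : (X * derivative (P (n + 1))).natDegree ≤ n + 1 := by
      refine natDegree_mul_le.trans ?_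
      have := natDegree_derivative_le (P (n + 1))
      rw [hP.natDegree_eq] at this
      have hX : (X : R[X]).natDegree ≤ 1 := natDegree_X_le
      omega
    rw [hP.map_mul_of_natDegree_le hdeg, coeff_X_mul, coeff_derivative, hP.coeff_self]
    push_cast
    ring

end IsMonicOPS

structure HasCoeffDerivAt (q : ℝ → ℝ[X]) (q' : ℝ[X]) (t : ℝ) : Prop where
  eventually_natDegree_le : ∃ D, ∀ᶠ s in 𝓝 t, (q s).natDegree ≤ D
  hasDerivAt_coeff : ∀ k, HasDerivAt (fun s => (q s).coeff k) (q'.coeff k) t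

namespace HasCoeffDerivAt

variable {q r : ℝ → ℝ[X]} {q' r' : ℝ[X]} {t : ℝ}

lemma const (p : ℝ[X]) (t : ℝ) : HasCoeffDerivAt (fun _ => p) 0 t :=
  ⟨⟨p.natDegree, .of_forall fun _ => le_rfl⟩, fun k => by
    simpa using hasDerivAt_const t (p.coeff k)⟩

protected lemma C {f : ℝ → ℝ} {f' : ℝ} (hf : HasDerivAt f f' t) :
    HasCoeffDerivAt (fun s => C (f s)) (C f') t := by
  refine ⟨⟨0, .of_forall fun _ => (natDegree_C _).le⟩, fun k => ?_⟩
  rcases k with _ | k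
  · simpa using hf
  · simpa using hasDerivAt_const t (0 : ℝ)

lemma congr_of_eventuallyEq (hq : HasCoeffDerivAt q q' t) (hrq : r =ᶠ[𝓝 t] q) :
    HasCoeffDerivAt r q' t := by
  obtain ⟨D, hD⟩ := hq.eventually_natDegree_le
  refine ⟨⟨D, ?_⟩, fun k => (hq.hasDerivAt_coeff k).congr_of_eventuallyEq ?_⟩
  · filter_upwards [hD, hrq] with s hs hrs
    rwa [hrs]
  · filter_upwards [hrq] with s hrs
    rw [hrs]

lemma sub (hq : HasCoeffDerivAt q q' t) (hr : HasCoeffDerivAt r r' t) :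
    HasCoeffDerivAt (fun s => q s - r s) (q' - r') t := by
  obtain ⟨D, hD⟩ := hq.eventually_natDegree_le
  obtain ⟨E, hE⟩ := hr.eventually_natDegree_le
  refine ⟨⟨max D E, ?_⟩, fun k => ?_⟩
  · filter_upwards [hD, hE] with s hs hs'
    exact (natDegree_sub_le _ _).trans (max_le_max hs hs')
  · simp only [coeff_sub]
    exact (hq.hasDerivAt_coeff k).fun_sub (hr.hasDerivAt_coeff k)

lemma mul (hq : HasCoeffDerivAt q q' t) (hr : HasCoeffDerivAt r r' t) :
    HasCoeffDerivAt (fun s => q s * r s) (q' * r t + q t * r') t := by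
  obtain ⟨D, hD⟩ := hq.eventually_natDegree_le
  obtain ⟨E, hE⟩ := hr.eventually_natDegree_le
  refine ⟨⟨D + E, ?_⟩, fun k => ?_⟩
  · filter_upwards [hD, hE] with s hs hs'
    exact natDegree_mul_le.trans (add_le_add hs hs')
  · simp only [coeff_add, coeff_mul, ← Finset.sum_add_distrib]
    exact HasDerivAt.fun_sum fun p _ => (hq.hasDerivAt_coeff p.1).mul (hr.hasDerivAt_coeff p.2)

lemma coeff_eq_zero_of_eventually_const (hq : HasCoeffDerivAt q q' t) {k : ℕ} {c : ℝ}
    (hc : ∀ᶠ s in 𝓝 t, (q s).coeff k = c) : q'.coeff k = 0 :=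
  (hq.hasDerivAt_coeff k).unique ((hasDerivAt_const t c).congr_of_eventuallyEq hc)

lemma hasDerivAt_momentFunctional {m : ℝ → ℕ → ℝ} {m' : ℕ → ℝ}
    (hm : ∀ k, HasDerivAt (fun s => m s k) (m' k) t) (hq : HasCoeffDerivAt q q' t) :
    HasDerivAt (fun s => momentFunctional (m s) (q s))
      (momentFunctional m' (q t) + momentFunctional (m t) q') t := by
  obtain ⟨D, hD⟩ := hq.eventually_natDegree_le
  have hq'D : q'.natDegree ≤ D := natDegree_le_iff_coeff_eq_zero.2 fun k hk =>
    hq.coeff_eq_zero_of_eventually_const <| hD.mono fun s hs =>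
      coeff_eq_zero_of_natDegree_lt (hs.trans_lt hk)
  have hsum := HasDerivAt.fun_sum (u := Finset.range (D + 1)) fun k _ =>
    (hm k).mul (hq.hasDerivAt_coeff k)
  rw [Finset.sum_add_distrib, ← momentFunctional_eq_sum _ hD.self_of_nhds,
    ← momentFunctional_eq_sum _ hq'D] at hsum
  exact hsum.congr_of_eventuallyEq (hD.mono fun s hs => momentFunctional_eq_sum _ hs)

end HasCoeffDerivAt

section OrthogonalFamily

variable {m : ℝ → ℕ → ℝ} {m' : ℕ → ℝ} {t : ℝ} {P : ℕ → ℝ → ℝ[X]} {h a b : ℕ → ℝ → ℝ}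
  (hm : ∀ k, HasDerivAt (fun s => m s k) (m' k) t)
  (hP : ∀ᶠ s in 𝓝 t,
    IsMonicOPS (momentFunctional (m s)) (fun n => P n s) (fun n => h n s) (fun n => a n s)
      (fun n => b n s))
include hm hP

/-- The derivative of `P n` has degree `< n`, so it is orthogonal to `P n`. -/
lemma hasDerivAt_normSq_of_hasCoeffDerivAt {n : ℕ} {p' : ℝ[X]} (hPn : HasCoeffDerivAt (P n) p' t) :
    HasDerivAt (h n) (momentFunctional m' (P n t * P n t)) t := by
  have hp' : p'.degree < n := by
    refine (degree_lt_iff_coeff_zero _ _).2 fun k hk => hPn.coeff_eq_zero_of_eventually_const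
      (c := if k = n then 1 else 0) (hP.mono fun s hs => ?_)
    split_ifs with hkn
    · exact hkn ▸ hs.coeff_self n
    · exact coeff_eq_zero_of_natDegree_lt (by rw [hs.natDegree_eq]; omega)
  have hLt := hP.self_of_nhds
  have hderiv := (hPn.mul hPn).hasDerivAt_momentFunctional hm
  rw [map_add, hLt.map_mul_eq_zero_of_degree_lt hp', mul_comm (P n t) p',
    hLt.map_mul_eq_zero_of_degree_lt hp', add_zero, add_zero] at hderiv
  exact hderiv.congr_of_eventuallyEq (hP.mono fun s hs => (hs.map_mul_self n).symm)

lemma exists_hasDerivAt_a {n : ℕ} {p' : ℝ[X]} (hPn : HasCoeffDerivAt (P n) p' t)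
    (hh : h n t ≠ 0) : ∃ a', HasDerivAt (a n) a' t := by
  have hnum := (((HasCoeffDerivAt.const X t).mul hPn).mul hPn).hasDerivAt_momentFunctional hm
  have hden := hasDerivAt_normSq_of_hasCoeffDerivAt hm hP hPn
  refine ⟨_, (hnum.div hden hh).congr_of_eventuallyEq ?_⟩
  filter_upwards [hP, hden.continuousAt.eventually_ne hh] with s hs hhs
  simp only [Pi.div_apply]
  rw [hs.map_X_mul_mul_self n, mul_div_cancel_right₀ _ hhs]

lemma exists_hasDerivAt_b {n : ℕ} {p' p'' : ℝ[X]} (hPn : HasCoeffDerivAt (P n) p' t)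
    (hPn1 : HasCoeffDerivAt (P (n + 1)) p'' t) (hh : h n t ≠ 0) :
    ∃ b', HasDerivAt (b (n + 1)) b' t := by
  have hnum := hasDerivAt_normSq_of_hasCoeffDerivAt hm hP hPn1
  have hden := hasDerivAt_normSq_of_hasCoeffDerivAt hm hP hPn
  refine ⟨_, (hnum.div hden hh).congr_of_eventuallyEq ?_⟩
  filter_upwards [hP, hden.continuousAt.eventually_ne hh] with s hs hhs
  rw [Pi.div_apply, ← hs.b_succ_mul_h n, mul_div_cancel_right₀ _ hhs]

/-- `P (n + 2)` is built from `P (n + 1)`, `P n` by the recurrence, whose coefficients are quotients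
of moments of `P n`, `P (n + 1)`. -/
lemma exists_hasCoeffDerivAt (hh : ∀ n, h n t ≠ 0) (n : ℕ) : ∃ p', HasCoeffDerivAt (P n) p' t := by
  suffices ∀ n, (∃ p', HasCoeffDerivAt (P n) p' t) ∧ ∃ p', HasCoeffDerivAt (P (n + 1)) p' t from
    (this n).1
  intro n
  induction n with
  | zero =>
    have h0 : HasCoeffDerivAt (P 0) 0 t := (HasCoeffDerivAt.const 1 t).congr_of_eventuallyEq
      (hP.mono fun s hs => hs.zero_eq_one)
    obtain ⟨a', ha'⟩ := exists_hasDerivAt_a hm hP h0 (hh 0)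
    refine ⟨⟨_, h0⟩, _, (((HasCoeffDerivAt.const X t).mul h0).sub
      ((HasCoeffDerivAt.C ha').mul h0)).congr_of_eventuallyEq ?_⟩
    filter_upwards [hP] with s hs
    simp only [hs.recurrence_zero]
    ring
  | succ n ih =>
    obtain ⟨⟨p, hp⟩, ⟨p₁, hp₁⟩⟩ := ih
    obtain ⟨a', ha'⟩ := exists_hasDerivAt_a hm hP hp₁ (hh (n + 1))
    obtain ⟨b', hb'⟩ := exists_hasDerivAt_b hm hP hp hp₁ (hh n)
    refine ⟨⟨_, hp₁⟩, _, ((((HasCoeffDerivAt.const X t).mul hp₁).sub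
      ((HasCoeffDerivAt.C ha').mul hp₁)).sub
      ((HasCoeffDerivAt.C hb').mul hp)).congr_of_eventuallyEq ?_⟩
    filter_upwards [hP] with s hs
    simp only [hs.recurrence_succ]
    ring

lemma hasDerivAt_normSq (hh : ∀ n, h n t ≠ 0) (n : ℕ) :
    HasDerivAt (h n) (momentFunctional m' (P n t * P n t)) t :=
  have ⟨_, hPn⟩ := exists_hasCoeffDerivAt hm hP hh n
  hasDerivAt_normSq_of_hasCoeffDerivAt hm hP hPn

end OrthogonalFamily

namespace PerturbedAiry

noncomputable def weight (r s x : ℝ) : ℝ := x ^ r * exp (-x ^ 3 - s / x)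

noncomputable def moment (r s : ℝ) : ℝ := ∫ x in Ioi 0, weight r s x

variable {l r s x : ℝ}

lemma weight_nonneg (hx : 0 < x) : 0 ≤ weight r s x := by
  unfold weight; positivity

lemma continuousOn_weight (r s : ℝ) : ContinuousOn (weight r s) (Ioi 0) := by
  refine .mul (fun x hx => (continuousAt_rpow_const x r (.inl (ne_of_gt hx))).continuousWithinAt) ?_
  exact continuous_exp.comp_continuousOn ((continuous_pow 3).continuousOn.neg.sub
    (continuousOn_const.div continuousOn_id fun x hx => ne_of_gt hx))

/-- A Gamma-type majorant; raising `N` trades the factor `exp (-s / x)` for a power of `x`. -/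
lemma weight_le (hs : 0 < s) (hx : 0 < x) (N : ℕ) :
    weight r s x ≤ N ! * exp 1 / s ^ N * (x ^ (r + N) * exp (-x)) := by
  have hcube : exp (-x ^ 3) ≤ exp 1 * exp (-x) := by
    rw [← exp_add]
    exact exp_le_exp.2 (by nlinarith [mul_nonneg hx.le (sq_nonneg (x - 1)), sq_nonneg (2 * x - 1)])
  have hsing : exp (-(s / x)) ≤ N ! * x ^ N / s ^ N := by
    rw [exp_neg]
    calc (exp (s / x))⁻¹ ≤ ((s / x) ^ N / N !)⁻¹ :=
          inv_anti₀ (by positivity) (pow_div_factorial_le_exp _ (by positivity) N)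
      _ = N ! * x ^ N / s ^ N := by rw [div_pow]; field_simp
  calc weight r s x = x ^ r * (exp (-x ^ 3) * exp (-(s / x))) := by
        rw [weight, ← exp_add, sub_eq_add_neg]
    _ ≤ x ^ r * (exp 1 * exp (-x) * (N ! * x ^ N / s ^ N)) := by gcongr
    _ = N ! * exp 1 / s ^ N * (x ^ (r + N) * exp (-x)) := by
        rw [rpow_add hx, rpow_natCast]; ring

lemma integrableOn_weight (r : ℝ) (hs : 0 < s) : IntegrableOn (weight r s) (Ioi 0) := by
  obtain ⟨N, hN⟩ := exists_nat_ge (-r)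
  have hgamma := (GammaIntegral_convergent (s := r + N + 1) (by linarith)).const_mul
    (N ! * exp 1 / s ^ N)
  refine hgamma.mono' ((continuousOn_weight r s).aestronglyMeasurable measurableSet_Ioi) ?_
  filter_upwards [ae_restrict_mem measurableSet_Ioi] with x hx
  rw [norm_of_nonneg (weight_nonneg hx), add_sub_cancel_right, mul_comm (exp _)]
  exact weight_le hs hx N

lemma tendsto_weight_nhdsGT_zero (r : ℝ) (hs : 0 < s) :
    Tendsto (weight r s) (𝓝[>] 0) (𝓝 0) := by
  obtain ⟨N, hN⟩ := exists_nat_ge (1 - r)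
  have hbound :
      Tendsto (fun x => N ! * exp 1 / s ^ N * (x ^ (r + N) * exp (-x))) (𝓝[>] 0) (𝓝 0) := by
    have hcont : ContinuousAt (fun x : ℝ => x ^ (r + N) * exp (-x)) 0 :=
      (continuousAt_rpow_const 0 _ (.inr (by linarith))).mul (by fun_prop)
    simpa [zero_rpow (by linarith : r + N ≠ 0)] using
      (hcont.tendsto.const_mul (N ! * exp 1 / s ^ N)).mono_left nhdsWithin_le_nhds
  refine tendsto_of_tendsto_of_tendsto_of_le_of_le' tendsto_const_nhds hbound ?_ ?_
  all_goals filter_upwards [self_mem_nhdsWithin] with x hx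
  · exact weight_nonneg hx
  · exact weight_le hs hx N

lemma tendsto_weight_atTop (r : ℝ) (hs : 0 < s) : Tendsto (weight r s) atTop (𝓝 0) := by
  have hbound := (tendsto_rpow_mul_exp_neg_mul_atTop_nhds_zero r 1 one_pos).const_mul (exp 1)
  rw [mul_zero] at hbound
  refine tendsto_of_tendsto_of_tendsto_of_le_of_le' tendsto_const_nhds hbound ?_ ?_
  all_goals filter_upwards [eventually_gt_atTop 0] with x hx
  · exact weight_nonneg hx
  · simpa using weight_le (r := r) hs hx 0

lemma hasDerivAt_weight_param (r : ℝ) (hx : 0 < x) (s : ℝ) :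
    HasDerivAt (fun s => weight r s x) (-weight (r - 1) s x) s := by
  have h : HasDerivAt (fun s => weight r s x) (x ^ r * (exp (-x ^ 3 - s / x) * -(1 / x))) s :=
    (((hasDerivAt_id' s).div_const x).const_sub (-x ^ 3)).exp.const_mul (x ^ r)
  refine h.congr_deriv ?_
  rw [weight, rpow_sub hx, rpow_one]
  field_simp

lemma hasDerivAt_weight (r s : ℝ) (hx : 0 < x) :
    HasDerivAt (weight r s)
      (r * weight (r - 1) s x - 3 * weight (r + 2) s x + s * weight (r - 2) s x) x := by
  have h : HasDerivAt (weight r s) (r * x ^ (r - 1) * exp (-x ^ 3 - s / x)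
      + x ^ r * (exp (-x ^ 3 - s / x) * (-(3 * x ^ 2) - s * -(x ^ 2)⁻¹))) x := by
    have hinner :=
      ((hasDerivAt_pow 3 x).fun_neg).fun_sub ((hasDerivAt_inv (ne_of_gt hx)).const_mul s)
    simp only [← div_eq_mul_inv] at hinner
    exact (hasDerivAt_rpow_const (p := r) (.inl (ne_of_gt hx))).mul (by simpa using hinner.exp)
  refine h.congr_deriv ?_
  simp only [weight, rpow_sub hx, rpow_add hx, rpow_one, rpow_two]
  field_simp
  ring

lemma hasDerivAt_moment (r : ℝ) {t : ℝ} (ht : 0 < t) :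
    HasDerivAt (moment r) (-moment (r - 1) t) t := by
  have hdiff := hasDerivAt_integral_of_dominated_loc_of_deriv_le
    (μ := volume.restrict (Ioi 0)) (F := fun s x => weight r s x)
    (F' := fun s x => -weight (r - 1) s x) (x₀ := t) (bound := weight (r - 1) (t / 2))
    (Metric.ball_mem_nhds t (half_pos ht))
    (.of_forall fun s => (continuousOn_weight r s).aestronglyMeasurable measurableSet_Ioi)
    (integrableOn_weight r ht)
    ((continuousOn_weight (r - 1) t).aestronglyMeasurable measurableSet_Ioi).neg ?_
    (integrableOn_weight (r - 1) (half_pos ht)) ?_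
  · have h := hdiff.2
    rw [integral_neg] at h
    exact h
  all_goals filter_upwards [ae_restrict_mem measurableSet_Ioi] with x (hx : 0 < x) s hs
  · have hts : t / 2 ≤ s := by
      have := (abs_lt.mp (Real.dist_eq s t ▸ Metric.mem_ball.mp hs)).1
      linarith
    rw [norm_neg, norm_of_nonneg (weight_nonneg hx)]
    unfold weight
    gcongr
  · exact hasDerivAt_weight_param r hx s

/-- `weight q s` vanishes at both ends of `(0, ∞)`, so its derivative integrates to zero. -/
lemma moment_ibp (q : ℝ) (hs : 0 < s) :
    q * moment (q - 1) s - 3 * moment (q + 2) s + s * moment (q - 2) s = 0 := by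
  set f := (Ioi (0 : ℝ)).indicator (weight q s)
  have hderiv : ∀ x ∈ Ioi (0 : ℝ), HasDerivAt f
      (q * weight (q - 1) s x - 3 * weight (q + 2) s x + s * weight (q - 2) s x) x := fun x hx =>
    (hasDerivAt_weight q s hx).congr_of_eventuallyEq <| by
      filter_upwards [isOpen_Ioi.mem_nhds hx] with y hy using indicator_of_mem hy _
  have hcont : ContinuousWithinAt f (Ici 0) 0 := by
    rw [← continuousWithinAt_Ioi_iff_Ici, ContinuousWithinAt, show f 0 = 0 from
      indicator_of_notMem (lt_irrefl 0) _]
    exact (tendsto_weight_nhdsGT_zero q hs).congr' <| by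
      filter_upwards [self_mem_nhdsWithin] with y hy using (indicator_of_mem hy _).symm
  have hlim : Tendsto f atTop (𝓝 0) := (tendsto_weight_atTop q hs).congr' <| by
    filter_upwards [eventually_gt_atTop 0] with y hy using (indicator_of_mem hy _).symm
  have hint (r c : ℝ) : Integrable (fun x => c * weight r s x) (volume.restrict (Ioi 0)) :=
    (integrableOn_weight r hs).const_mul c
  have hftc := integral_Ioi_of_hasDerivAt_of_tendsto hcont hderiv
    (((hint _ q).sub (hint _ 3)).add (hint _ s)) hlim
  rw [integral_add (f := fun x => q * weight (q - 1) s x - 3 * weight (q + 2) s x)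
    ((hint _ q).sub (hint _ 3)) (hint _ s), integral_sub (hint _ q) (hint _ 3),
    show f 0 = 0 from indicator_of_notMem (lt_irrefl 0) _, sub_zero] at hftc
  simp only [integral_const_mul] at hftc
  exact hftc

noncomputable def functional (l s : ℝ) : ℝ[X] →ₗ[ℝ] ℝ :=
  momentFunctional fun k => moment (l + k) s

lemma functional_monomial (l s : ℝ) (k : ℕ) (c : ℝ) :
    functional l s (monomial k c) = moment (l + k) s * c :=
  momentFunctional_monomial _ k c

lemma pow_mul_weight (hx : 0 < x) (k : ℕ) : x ^ k * weight l s x = weight (l + k) s x := by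
  rw [weight, weight, rpow_add hx, rpow_natCast]
  ring

lemma integrableOn_eval_mul_weight_and_integral_eq (l : ℝ) (hs : 0 < s) (q : ℝ[X]) :
    IntegrableOn (fun x => q.eval x * weight l s x) (Ioi 0) ∧
      ∫ x in Ioi 0, q.eval x * weight l s x = functional l s q := by
  induction q using Polynomial.induction_on' with
  | add p q hp hq =>
    simp only [eval_add, add_mul, map_add]
    exact ⟨hp.1.add hq.1, (integral_add hp.1 hq.1).trans (by rw [hp.2, hq.2])⟩
  | monomial k c =>
    have heq : EqOn (fun x => (monomial k c).eval x * weight l s x)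
        (fun x => c * weight (l + k) s x) (Ioi 0) := fun x hx => by
      simp only [eval_monomial, mul_assoc, pow_mul_weight hx]
    have hint : IntegrableOn (fun x => c * weight (l + k) s x) (Ioi 0) :=
      (integrableOn_weight _ hs).const_mul c
    refine ⟨hint.congr_fun heq.symm measurableSet_Ioi, ?_⟩
    rw [setIntegral_congr_fun measurableSet_Ioi heq, integral_const_mul, functional_monomial,
      mul_comm]
    rfl

lemma X_mul_derivative_monomial (k : ℕ) (c : ℝ) :
    X * derivative (monomial k c) = monomial k (c * k) := by
  cases k with
  | zero => simp
  | succ k => rw [derivative_monomial, X_mul_monomial, Nat.add_sub_cancel]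

lemma functional_ibp (l : ℝ) (hs : 0 < s) (q : ℝ[X]) :
    s * functional (l - 1) s q = 3 * functional l s (X ^ 3 * q) - (l + 1) * functional l s q
      - functional l s (X * derivative q) := by
  induction q using Polynomial.induction_on' with
  | add p q hp hq =>
    simp only [map_add, mul_add]
    linear_combination hp + hq
  | monomial k c =>
    have hibp := moment_ibp (l + k + 1) hs
    rw [show l + k + 1 - 1 = l + k by ring, show l + k + 1 + 2 = l + ↑(k + 3) by push_cast; ring,
      show l + k + 1 - 2 = l - 1 + k by ring] at hibp
    rw [X_pow_mul_monomial, X_mul_derivative_monomial, functional_monomial, functional_monomial,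
      functional_monomial, functional_monomial]
    linear_combination c * hibp

lemma mul_functional_sub_one_mul_self (hs : 0 < s) {P : ℕ → ℝ[X]} {h a b : ℕ → ℝ}
    (hP : IsMonicOPS (functional l s) P h a b) (n : ℕ) :
    s * functional (l - 1) s (P (n + 1) * P (n + 1))
      = (3 * jacobiCubeDiag a b n - (l + 1 + 2 * (n + 1))) * h (n + 1) := by
  have hderiv : X * derivative (P (n + 1) * P (n + 1))
      = X * derivative (P (n + 1)) * P (n + 1) + X * derivative (P (n + 1)) * P (n + 1) := by
    rw [derivative_mul]; ring
  rw [functional_ibp l hs, ← mul_assoc, hP.map_X_pow_three_mul_mul_self, hderiv, map_add,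
    hP.map_X_mul_derivative_mul_self, hP.map_mul_self]
  push_cast
  ring

lemma isMonicOPS_functional {lam s : ℝ} (hs : 0 < s) {w : ℝ → ℝ}
    (hw : ∀ x : ℝ, 0 < x → w x = x ^ lam * exp (-x ^ 3 - s / x)) {P : ℕ → ℝ[X]} {h α β : ℕ → ℝ}
    (hP : ∀ n, (P n).Monic ∧ (P n).natDegree = n)
    (horth : ∀ m n, ∫ x in Ioi 0, (P m).eval x * (P n).eval x * w x = if m = n then h n else 0)
    (hrec : ∀ n, 1 ≤ n → ∀ x : ℝ,
      x * (P n).eval x = (P (n + 1)).eval x + α n * (P n).eval x + β n * (P (n - 1)).eval x)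
    (hrec0 : ∀ x : ℝ, x * (P 0).eval x = (P 1).eval x + α 0 * (P 0).eval x) :
    IsMonicOPS (functional lam s) P h α β where
  monic n := (hP n).1
  natDegree_eq n := (hP n).2
  orthogonal m n := by
    rw [← horth, ← (integrableOn_eval_mul_weight_and_integral_eq lam hs _).2]
    refine setIntegral_congr_fun measurableSet_Ioi fun x hx => ?_
    rw [eval_mul, hw x hx, weight]
  recurrence_zero := Polynomial.funext fun x => by simp [hrec0 x]
  recurrence_succ n := Polynomial.funext fun x => by simpa using hrec (n + 1) (by omega) x

lemma hasDerivAt_normSq {lam t : ℝ} (ht : 0 < t) {P : ℕ → ℝ → ℝ[X]} {h α β : ℕ → ℝ → ℝ}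
    (hP : ∀ s, 0 < s → IsMonicOPS (functional lam s) (fun n => P n s) (fun n => h n s)
      (fun n => α n s) (fun n => β n s))
    (hh : ∀ n, h n t ≠ 0) (n : ℕ) :
    HasDerivAt (h n) (-functional (lam - 1) t (P n t * P n t)) t := by
  have hm (k : ℕ) : HasDerivAt (fun s => moment (lam + k) s) (-moment (lam - 1 + k) t) t := by
    rw [show lam - 1 + k = lam + k - 1 by ring]
    exact hasDerivAt_moment _ ht
  have hderiv := _root_.hasDerivAt_normSq hm (eventually_of_mem (Ioi_mem_nhds ht) hP) hh n
  rw [momentFunctional_neg] at hderiv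
  exact hderiv

end PerturbedAiry

open PerturbedAiry

theorem stmt_17_general
    (lam : ℝ)
    (w : ℝ → ℝ → ℝ)
    (hw : ∀ s : ℝ, 0 < s → ∀ x : ℝ, 0 < x → w s x = x ^ lam * Real.exp (-x ^ 3 - s / x))
    (P : ℕ → ℝ → Polynomial ℝ) (h : ℕ → ℝ → ℝ) (α β : ℕ → ℝ → ℝ)
    (hP : ∀ s : ℝ, 0 < s → ∀ n, (P n s).Monic ∧ (P n s).natDegree = n)
    (hpos : ∀ s : ℝ, 0 < s → ∀ n, 0 < h n s)
    (horth : ∀ s : ℝ, 0 < s → ∀ m n, ∫ x in Set.Ioi (0 : ℝ),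
        (P m s).eval x * (P n s).eval x * w s x = if m = n then h n s else 0)
    (hrec : ∀ s : ℝ, 0 < s → ∀ n, 1 ≤ n → ∀ x : ℝ, x * (P n s).eval x
        = (P (n + 1) s).eval x + α n s * (P n s).eval x + β n s * (P (n - 1) s).eval x)
    (hrec0 : ∀ s : ℝ, 0 < s → ∀ x : ℝ,
        x * (P 0 s).eval x = (P 1 s).eval x + α 0 s * (P 0 s).eval x)
    (t : ℝ) (ht : 0 < t)
    : ∀ n : ℕ, 2 ≤ n →
      t * deriv (β n) t
        = β n t * (2 + 3 * α (n - 2) t * β (n - 1) t - 3 * α (n + 1) t * β (n + 1) t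
            + 3 * α (n - 1) t * ((α (n - 1) t) ^ 2 + β n t + 2 * β (n - 1) t)
            - 3 * α n t * ((α n t) ^ 2 + β n t + 2 * β (n + 1) t)) := by
  intro n hn
  obtain ⟨k, rfl⟩ : ∃ k, n = k + 2 := ⟨n - 2, by omega⟩
  have hO (s : ℝ) (hs : 0 < s) := isMonicOPS_functional hs (hw s hs) (hP s hs) (horth s hs)
    (hrec s hs) (hrec0 s hs)
  have hh (j : ℕ) : h j t ≠ 0 := (hpos t ht j).ne'
  have hβ : β (k + 2) =ᶠ[𝓝 t] fun s => h (k + 2) s / h (k + 1) s := by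
    filter_upwards [Ioi_mem_nhds ht] with s hs
    rw [← (hO s hs).b_succ_mul_h (k + 1), mul_div_cancel_right₀ _ (hpos s hs _).ne']
  have hb : β (k + 2) t * h (k + 1) t = h (k + 2) t := (hO t ht).b_succ_mul_h (k + 1)
  have hIBP₁ := mul_functional_sub_one_mul_self ht (hO t ht) k
  have hIBP₂ := mul_functional_sub_one_mul_self ht (hO t ht) (k + 1)
  rw [(((hasDerivAt_normSq ht hO hh _).div (hasDerivAt_normSq ht hO hh _)
    (hh _)).congr_of_eventuallyEq hβ).deriv, show k + 2 - 1 = k + 1 by omega,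
    show k + 2 - 2 = k by omega]
  simp only [jacobiCubeDiag, add_assoc, Nat.reduceAdd] at hIBP₁ hIBP₂ ⊢
  rw [← mul_div_assoc, div_eq_iff (pow_ne_zero 2 (hh _))]
  rw [← hb] at hIBP₂ ⊢
  push_cast at hIBP₂
  linear_combination (-h (k + 1) t) * hIBP₂ + β (k + 2) t * h (k + 1) t * hIBP₁

theorem stmt_17
    (lam : ℝ) (hlam : -1 < lam)
    (w : ℝ → ℝ → ℝ)
    (hw : ∀ s : ℝ, 0 < s → ∀ x : ℝ, 0 < x → w s x = x ^ lam * Real.exp (-x ^ 3 - s / x))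
    (P : ℕ → ℝ → Polynomial ℝ) (h : ℕ → ℝ → ℝ) (α β : ℕ → ℝ → ℝ)
    (hP : ∀ s : ℝ, 0 < s → ∀ n, (P n s).Monic ∧ (P n s).natDegree = n)
    (hpos : ∀ s : ℝ, 0 < s → ∀ n, 0 < h n s)
    (horth : ∀ s : ℝ, 0 < s → ∀ m n, ∫ x in Set.Ioi (0 : ℝ),
        (P m s).eval x * (P n s).eval x * w s x = if m = n then h n s else 0)
    (hP0 : ∀ s : ℝ, 0 < s → P 0 s = 1)
    (hrec : ∀ s : ℝ, 0 < s → ∀ n, 1 ≤ n → ∀ x : ℝ, x * (P n s).eval x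
        = (P (n + 1) s).eval x + α n s * (P n s).eval x + β n s * (P (n - 1) s).eval x)
    (hrec0 : ∀ s : ℝ, 0 < s → ∀ x : ℝ,
        x * (P 0 s).eval x = (P 1 s).eval x + α 0 s * (P 0 s).eval x)
    (t : ℝ) (ht : 0 < t)
    : ∀ n : ℕ, 2 ≤ n →
      t * deriv (β n) t
        = β n t * (2 + 3 * α (n - 2) t * β (n - 1) t - 3 * α (n + 1) t * β (n + 1) t
            + 3 * α (n - 1) t * ((α (n - 1) t) ^ 2 + β n t + 2 * β (n - 1) t)
            - 3 * α n t * ((α n t) ^ 2 + β n t + 2 * β (n + 1) t)) :=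
  stmt_17_general lam w hw P h α β hP hpos horth hrec hrec0 t ht
end
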